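/- Let F = I + R_y + R_w be a d×d complex matrix where R_y is a real matrix with σ_min(I+R_y) ≥ δ, and R_w = R_r + i·R_i with R_r, R_i real matrices satisfying σ_max(R_r) ≤ β and σ_max(R_i) ≤ β, where 0 < β < δ/2 < 1/2. Then the real part of the Hermitian matrix F^T F satisfies λ_min(Re(F^T F)) ≥ (δ−β)^2 − β^2 ≥ δ(δ − 2β) > 0; in particular Re(F^T F) is positive definite. -/

import Mathlib

open Matrix
open scoped RealInnerProductSpace

/-- The largest singular value (spectral norm) of a real square matrix. -/
noncomputable def sigmaMaxR {n : ℕ} (A : Matrix (Fin n) (Fin n) ℝ) : ℝ :=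
  ‖Matrix.toEuclideanCLM (𝕜 := ℝ) (n := Fin n) A‖

/-- The smallest singular value of a real square matrix. -/
noncomputable def sigmaMinR {n : ℕ} (A : Matrix (Fin n) (Fin n) ℝ) : ℝ :=
  ⨅ x : Metric.sphere (0 : EuclideanSpace ℝ (Fin n)) 1,
    ‖Matrix.toEuclideanCLM (𝕜 := ℝ) (n := Fin n) A (x : EuclideanSpace ℝ (Fin n))‖

/-- The smallest eigenvalue of a real symmetric matrix (as min of Rayleigh quotient). -/
noncomputable def lambdaMinR {n : ℕ} (M : Matrix (Fin n) (Fin n) ℝ) : ℝ :=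
  ⨅ x : Metric.sphere (0 : EuclideanSpace ℝ (Fin n)) 1,
    ⟪Matrix.toEuclideanCLM (𝕜 := ℝ) (n := Fin n) M (x : EuclideanSpace ℝ (Fin n)),
      (x : EuclideanSpace ℝ (Fin n))⟫

/-- The largest eigenvalue of a real symmetric matrix (as max of Rayleigh quotient). -/
noncomputable def lambdaMaxR {n : ℕ} (M : Matrix (Fin n) (Fin n) ℝ) : ℝ :=
  ⨆ x : Metric.sphere (0 : EuclideanSpace ℝ (Fin n)) 1,
    ⟪Matrix.toEuclideanCLM (𝕜 := ℝ) (n := Fin n) M (x : EuclideanSpace ℝ (Fin n)),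
      (x : EuclideanSpace ℝ (Fin n))⟫

/-- Rayleigh quotient of `AᵀA - BᵀB` as difference of squared norms. -/
lemma rayleigh_sub {n : ℕ} (A B : Matrix (Fin n) (Fin n) ℝ) (x : EuclideanSpace ℝ (Fin n)) :
    ⟪Matrix.toEuclideanCLM (𝕜 := ℝ) (Aᵀ * A - Bᵀ * B) x, x⟫ =
      ‖Matrix.toEuclideanCLM (𝕜 := ℝ) A x‖^2 - ‖Matrix.toEuclideanCLM (𝕜 := ℝ) B x‖^2 := by
  have hA : (Aᵀ : Matrix (Fin n) (Fin n) ℝ) = star A := rfl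
  have hB : (Bᵀ : Matrix (Fin n) (Fin n) ℝ) = star B := rfl
  rw [hA, hB, map_sub, _root_.map_mul, _root_.map_mul, map_star, map_star]
  simp only [ContinuousLinearMap.sub_apply, inner_sub_left, ContinuousLinearMap.mul_apply]
  rw [ContinuousLinearMap.star_eq_adjoint, ContinuousLinearMap.star_eq_adjoint,
    ContinuousLinearMap.adjoint_inner_left, ContinuousLinearMap.adjoint_inner_left,
    real_inner_self_eq_norm_sq, real_inner_self_eq_norm_sq]

/-- `σ_min` gives a lower bound on `‖A x‖` for any `x`. -/
lemma sigmaMinR_le {n : ℕ} (A : Matrix (Fin n) (Fin n) ℝ) (x : EuclideanSpace ℝ (Fin n)) :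
    sigmaMinR A * ‖x‖ ≤ ‖Matrix.toEuclideanCLM (𝕜 := ℝ) A x‖ := by
  rcases eq_or_ne x 0 with rfl | hx
  · simp
  · have hxn : ‖x‖ ≠ 0 := norm_ne_zero_iff.mpr hx
    set u : EuclideanSpace ℝ (Fin n) := ‖x‖⁻¹ • x with hu
    have hus : u ∈ Metric.sphere (0 : EuclideanSpace ℝ (Fin n)) 1 := by
      simp [hu, norm_smul, abs_of_nonneg (inv_nonneg.mpr (norm_nonneg x)),
        inv_mul_cancel₀ hxn]
    have hle : sigmaMinR A ≤ ‖Matrix.toEuclideanCLM (𝕜 := ℝ) A u‖ := by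
      have : BddBelow (Set.range fun x : Metric.sphere (0 : EuclideanSpace ℝ (Fin n)) 1 =>
          ‖Matrix.toEuclideanCLM (𝕜 := ℝ) A (x : EuclideanSpace ℝ (Fin n))‖) :=
        ⟨0, by rintro r ⟨y, rfl⟩; exact norm_nonneg _⟩
      exact ciInf_le this (⟨u, hus⟩ : Metric.sphere (0 : EuclideanSpace ℝ (Fin n)) 1)
    have hnorm : ‖Matrix.toEuclideanCLM (𝕜 := ℝ) A u‖ =
        ‖x‖⁻¹ * ‖Matrix.toEuclideanCLM (𝕜 := ℝ) A x‖ := by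
      rw [hu, ContinuousLinearMap.map_smul, norm_smul, norm_inv, norm_norm]
    rw [hnorm] at hle
    calc sigmaMinR A * ‖x‖ ≤ (‖x‖⁻¹ * ‖Matrix.toEuclideanCLM (𝕜 := ℝ) A x‖) * ‖x‖ := by
          exact mul_le_mul_of_nonneg_right hle (norm_nonneg x)
      _ = ‖Matrix.toEuclideanCLM (𝕜 := ℝ) A x‖ := by field_simp

theorem re_FtF_posdef {d : ℕ} (δ β : ℝ) (hβ0 : 0 < β) (hβδ : β < δ / 2) (hδ : δ < 1)
    (Ry Rr Ri : Matrix (Fin d) (Fin d) ℝ)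
    (hy : sigmaMinR (1 + Ry) ≥ δ) (hr : sigmaMaxR Rr ≤ β) (hi : sigmaMaxR Ri ≤ β) :
    lambdaMinR ((1 + Ry + Rr)ᵀ * (1 + Ry + Rr) - Riᵀ * Ri) ≥ (δ - β) ^ 2 - β ^ 2 ∧
    (δ - β) ^ 2 - β ^ 2 ≥ δ * (δ - 2 * β) ∧ 0 < δ * (δ - 2 * β) ∧
    ((1 + Ry + Rr)ᵀ * (1 + Ry + Rr) - Riᵀ * Ri).PosDef := by
  have hδ0 : 0 < δ := by linarith
  have hδβ : 0 < δ - β := by linarith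
  set A : Matrix (Fin d) (Fin d) ℝ := 1 + Ry + Rr with hAdef
  set M : Matrix (Fin d) (Fin d) ℝ := Aᵀ * A - Riᵀ * Ri with hMdef
  -- key pointwise bound
  have key : ∀ x : EuclideanSpace ℝ (Fin d),
      ((δ - β) ^ 2 - β ^ 2) * ‖x‖ ^ 2 ≤ ⟪Matrix.toEuclideanCLM (𝕜 := ℝ) M x, x⟫ := by
    intro x
    rw [hMdef, rayleigh_sub]
    have hAx : (δ - β) * ‖x‖ ≤ ‖Matrix.toEuclideanCLM (𝕜 := ℝ) A x‖ := by
      have h1 : Matrix.toEuclideanCLM (𝕜 := ℝ) A x =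
          Matrix.toEuclideanCLM (𝕜 := ℝ) (1 + Ry) x +
          Matrix.toEuclideanCLM (𝕜 := ℝ) Rr x := by
        rw [hAdef, map_add, ContinuousLinearMap.add_apply]
      have h2 : δ * ‖x‖ ≤ ‖Matrix.toEuclideanCLM (𝕜 := ℝ) (1 + Ry) x‖ :=
        le_trans (mul_le_mul_of_nonneg_right hy (norm_nonneg x)) (sigmaMinR_le _ x)
      have h3 : ‖Matrix.toEuclideanCLM (𝕜 := ℝ) Rr x‖ ≤ β * ‖x‖ := by
        calc ‖Matrix.toEuclideanCLM (𝕜 := ℝ) Rr x‖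
            ≤ ‖Matrix.toEuclideanCLM (𝕜 := ℝ) (n := Fin d) Rr‖ * ‖x‖ :=
              ContinuousLinearMap.le_opNorm _ x
          _ ≤ β * ‖x‖ := mul_le_mul_of_nonneg_right hr (norm_nonneg x)
      have h4 : ‖Matrix.toEuclideanCLM (𝕜 := ℝ) (1 + Ry) x‖ -
          ‖Matrix.toEuclideanCLM (𝕜 := ℝ) Rr x‖ ≤ ‖Matrix.toEuclideanCLM (𝕜 := ℝ) A x‖ := by
        have t := norm_sub_le (Matrix.toEuclideanCLM (𝕜 := ℝ) (1 + Ry) x +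
            Matrix.toEuclideanCLM (𝕜 := ℝ) Rr x) (Matrix.toEuclideanCLM (𝕜 := ℝ) Rr x)
        simp only [add_sub_cancel_right] at t
        rw [h1]; linarith
      linarith
    have hRix : ‖Matrix.toEuclideanCLM (𝕜 := ℝ) Ri x‖ ≤ β * ‖x‖ := by
      calc ‖Matrix.toEuclideanCLM (𝕜 := ℝ) Ri x‖
          ≤ ‖Matrix.toEuclideanCLM (𝕜 := ℝ) (n := Fin d) Ri‖ * ‖x‖ :=
            ContinuousLinearMap.le_opNorm _ x
        _ ≤ β * ‖x‖ := mul_le_mul_of_nonneg_right hi (norm_nonneg x)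
    have hsq1 : ((δ - β) * ‖x‖) ^ 2 ≤ ‖Matrix.toEuclideanCLM (𝕜 := ℝ) A x‖ ^ 2 := by
      apply sq_le_sq' _ hAx
      have : 0 ≤ (δ - β) * ‖x‖ := mul_nonneg hδβ.le (norm_nonneg x)
      linarith [norm_nonneg (Matrix.toEuclideanCLM (𝕜 := ℝ) A x)]
    have hsq2 : ‖Matrix.toEuclideanCLM (𝕜 := ℝ) Ri x‖ ^ 2 ≤ (β * ‖x‖) ^ 2 := by
      apply sq_le_sq' _ hRix
      linarith [norm_nonneg (Matrix.toEuclideanCLM (𝕜 := ℝ) Ri x)]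
    nlinarith [norm_nonneg x]
  -- nonemptiness / degenerate dimension
  rcases Nat.eq_zero_or_pos d with hd | hd
  · subst hd
    exfalso
    have : IsEmpty (Metric.sphere (0 : EuclideanSpace ℝ (Fin 0)) 1) := by
      constructor
      rintro ⟨x, hx⟩
      have : x = 0 := Subsingleton.elim _ _
      rw [this] at hx
      simp at hx
    have h0 : sigmaMinR (1 + Ry) = 0 := by
      rw [sigmaMinR, Real.iInf_of_isEmpty]
    rw [h0] at hy
    linarith
  have : Nonempty (Fin d) := ⟨⟨0, hd⟩⟩
  have hne : Nonempty (Metric.sphere (0 : EuclideanSpace ℝ (Fin d)) 1) := by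
    obtain ⟨x, hx⟩ := (NormedSpace.sphere_nonempty
      (x := (0 : EuclideanSpace ℝ (Fin d))) (r := 1)).mpr zero_le_one
    exact ⟨⟨x, hx⟩⟩
  refine ⟨?_, by nlinarith, by nlinarith, ?_⟩
  · rw [lambdaMinR]
    apply le_ciInf
    rintro ⟨x, hx⟩
    have hx1 : ‖x‖ = 1 := by simpa using hx
    have := key x
    rw [hx1] at this
    simpa using this
  · rw [Matrix.posDef_iff_dotProduct_mulVec]
    constructor
    · -- Hermitian
      rw [Matrix.IsHermitian, Matrix.conjTranspose_eq_transpose_of_trivial, hMdef,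
        Matrix.transpose_sub, Matrix.transpose_mul, Matrix.transpose_mul,
        Matrix.transpose_transpose, Matrix.transpose_transpose]
    · intro x hx
      set y : EuclideanSpace ℝ (Fin d) := (WithLp.equiv 2 (Fin d → ℝ)).symm x with hy'
      have hyne : y ≠ 0 := by
        intro h
        apply hx
        have := congrArg (WithLp.equiv 2 (Fin d → ℝ)) h
        simpa [hy'] using this
      have hynorm : 0 < ‖y‖ := norm_pos_iff.mpr hyne
      have hq := key y
      have hpos : 0 < ⟪Matrix.toEuclideanCLM (𝕜 := ℝ) M y, y⟫ := by
        have hc : 0 < (δ - β) ^ 2 - β ^ 2 := by nlinarith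
        have h1 : 0 < ((δ - β) ^ 2 - β ^ 2) * ‖y‖ ^ 2 := by positivity
        linarith
      have heq : ⟪Matrix.toEuclideanCLM (𝕜 := ℝ) M y, y⟫ = star x ⬝ᵥ M.mulVec x := by
        rw [real_inner_comm]
        simp only [EuclideanSpace.inner_eq_star_dotProduct]
        simp [hy', Matrix.toLin'_apply, dotProduct, mul_comm]
      rw [heq] at hpos
      exact hpos
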